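/- arXiv:2503.03151 — 2 statements merged into one kernel-verified Lean document; each statement's English description precedes it below -/
import Mathlib

section
/- For any N×N real matrix L and any vector x ∈ ℝ^N, the multilinear extension of the principal-minor function satisfies Σ_{Y ⊆ {1,…,N}} (Π_{i∈Y} x_i)(Π_{i∉Y} (1−x_i)) det(L_Y) = det(diag(x)(L − I) + I), where diag(x) is the diagonal matrix with entries x_1,…,x_N. -/
/-- The principal submatrix of `L` indexed by the subset `Y`. -/
noncomputable def principalMinor {N : ℕ} (L : Matrix (Fin N) (Fin N) ℝ)
    (Y : Finset (Fin N)) : ℝ :=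
  (L.submatrix (fun i : Y => (i : Fin N)) (fun j : Y => (j : Fin N))).det

open Matrix Finset in
lemma det_rowPiecewise {N : ℕ} (L : Matrix (Fin N) (Fin N) ℝ) (S : Finset (Fin N)) :
    (Matrix.of (S.piecewise (fun i => L i)
      (fun i => (1 : Matrix (Fin N) (Fin N) ℝ) i))).det = principalMinor L S := by
  classical
  rw [← Matrix.det_submatrix_equiv_self (Equiv.sumCompl (· ∈ S))]
  have h : (Matrix.of (S.piecewise (fun i => L i)
        (fun i => (1 : Matrix (Fin N) (Fin N) ℝ) i))).submatrix
      (Equiv.sumCompl (· ∈ S)) (Equiv.sumCompl (· ∈ S)) =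
      Matrix.fromBlocks
        (L.submatrix (fun i : S => (i : Fin N)) (fun j : S => (j : Fin N)))
        (L.submatrix (fun i : S => (i : Fin N)) (fun j : {j // j ∉ S} => (j : Fin N)))
        0 1 := by
    ext i j
    cases i with
    | inl i =>
      cases j with
      | inl j => simp [Finset.piecewise_eq_of_mem _ _ _ i.2]
      | inr j => simp [Finset.piecewise_eq_of_mem _ _ _ i.2]
    | inr i =>
      cases j with
      | inl j =>
        have : (i : Fin N) ≠ (j : Fin N) := fun h => i.2 (h ▸ j.2)
        simp [Finset.piecewise_eq_of_notMem _ _ _ i.2, Matrix.one_apply, this]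
      | inr j =>
        simp [Finset.piecewise_eq_of_notMem _ _ _ i.2, Matrix.one_apply,
          Subtype.ext_iff]
  rw [h, Matrix.det_fromBlocks_zero₂₁, Matrix.det_one, mul_one, principalMinor]

/-- The multilinear extension of the principal-minor function satisfies
Σ_{Y} (Π_{i∈Y} x_i)(Π_{i∉Y} (1−x_i)) det(L_Y) = det(diag(x)(L − I) + I). -/
theorem multilinear_extension_eq_det {N : ℕ} (L : Matrix (Fin N) (Fin N) ℝ)
    (x : Fin N → ℝ) :
    ∑ Y : Finset (Fin N),
        (∏ i ∈ Y, x i) * (∏ i ∈ Yᶜ, (1 - x i)) * principalMinor L Y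
      = (Matrix.diagonal x * (L - 1) + 1).det := by
  classical
  set a : Fin N → (Fin N → ℝ) := fun i => x i • (L i) with ha
  set b : Fin N → (Fin N → ℝ) := fun i => (1 - x i) • ((1 : Matrix (Fin N) (Fin N) ℝ) i) with hb
  have hM : (Matrix.diagonal x * (L - 1) + 1 : Matrix (Fin N) (Fin N) ℝ) =
      Matrix.of (a + b) := by
    ext i j
    simp [ha, hb, Matrix.mul_apply, Matrix.diagonal, Matrix.one_apply, Matrix.sub_apply,
      Finset.mul_sum, Pi.add_apply]
    split_ifs <;> ring
  rw [hM]
  have hdet : (Matrix.of (a + b)).det =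
      (Matrix.detRowAlternating (R := ℝ) (n := Fin N)).toMultilinearMap (a + b) := rfl
  rw [hdet, MultilinearMap.map_add_univ]
  apply Finset.sum_congr rfl
  intro S _
  set f := (Matrix.detRowAlternating (R := ℝ) (n := Fin N)).toMultilinearMap with hf
  set u : Fin N → (Fin N → ℝ) :=
    S.piecewise (fun i => L i) (fun i => (1 : Matrix (Fin N) (Fin N) ℝ) i) with hu
  set w : Fin N → (Fin N → ℝ) := S.piecewise (fun i => L i) b with hw
  have h1 : S.piecewise a b = S.piecewise (fun i => x i • w i) w := by
    funext i
    by_cases hi : i ∈ S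
    · simp [Finset.piecewise_eq_of_mem _ _ _ hi, ha, hw]
    · simp [Finset.piecewise_eq_of_notMem _ _ _ hi, hw]
  have h2 : w = Sᶜ.piecewise (fun i => (1 - x i) • u i) u := by
    funext i
    by_cases hi : i ∈ S
    · simp [hw, hu, Finset.piecewise_eq_of_mem _ _ _ hi,
        Finset.piecewise_eq_of_notMem _ _ _ (by simp [hi] : i ∉ Sᶜ)]
    · simp [hw, hu, hb, Finset.piecewise_eq_of_notMem _ _ _ hi,
        Finset.piecewise_eq_of_mem _ _ _ (by simp [hi] : i ∈ Sᶜ)]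
  have e1 : f (S.piecewise a b) = (∏ i ∈ S, x i) • f w := by
    rw [h1]; exact f.map_piecewise_smul x w S
  have e2 : f w = (∏ i ∈ Sᶜ, (1 - x i)) • f u := by
    rw [h2]; exact f.map_piecewise_smul (fun i => 1 - x i) u Sᶜ
  have e3 : f u = principalMinor L S := det_rowPiecewise L S
  rw [e1, e2, e3]
  simp [mul_assoc]
end

section
/- (Lemma 2, determinantal form) Let L = Σ_{n=1}^N λ_n v_n v_nᵀ be an N×N real symmetric matrix with orthonormal eigenvectors v_1,…,v_N and eigenvalues λ_n ≥ 0. Then for every subset Y ⊆ {1,…,N}, det(L_Y) = Σ_{J ⊆ {1,…,N}, |J| = |Y|} (Π_{n∈J} λ_n) · det((Σ_{n∈J} v_n v_nᵀ)_Y). Consequently, the L-ensemble probability det(L_Y)/det(L+I) equals the mixture Σ_{J, |J|=|Y|} det((K^{V_J})_Y) · (Π_{n∈J} λ_n/(1+λ_n)) · (Π_{n∉J} 1/(1+λ_n)), where K^{V_J} = Σ_{n∈J} v_n v_nᵀ; i.e., a DPP is a mixture of elementary DPPs. -/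
open Finset Matrix Function

section
variable {m κ : Type*} [Fintype m]

theorem image_univ_eq_of_injective [DecidableEq κ] {r : m → κ} (hr : Injective r)
    {J : Finset κ} (hrJ : ∀ i, r i ∈ J) (hJ : #J = Fintype.card m) : univ.image r = J :=
  eq_of_subset_of_card_le (image_subset_iff.mpr fun i _ => hrJ i)
    (by rw [hJ, card_image_of_injective _ hr, card_univ])

/-- An injective map `m → S` is counted on the right exactly once, for `J` its image. -/
theorem sum_piFinset_eq_sum_powersetCard [DecidableEq m] [DecidableEq κ] {M : Type*}
    [AddCommMonoid M] (S : Finset κ) (F : (m → κ) → M)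
    (hF : ∀ r, ¬Injective r → F r = 0) :
    ∑ r ∈ Fintype.piFinset (fun _ : m => S), F r =
      ∑ J ∈ S.powersetCard (Fintype.card m),
        ∑ r ∈ Fintype.piFinset (fun _ : m => J), F r := by
  have h_filter (T : Finset κ) : ∑ r ∈ Fintype.piFinset (fun _ : m => T), F r =
      ∑ r ∈ (Fintype.piFinset fun _ : m => T).filter Injective, F r :=
    (sum_filter_of_ne fun r _ hr => not_not.mp (mt (hF r) hr)).symm
  simp_rw [h_filter]
  rw [sum_comm' (t' := (Fintype.piFinset fun _ : m => S).filter Injective)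
    (s' := fun r => {univ.image r})]
  · simp only [sum_singleton]
  intro J r
  simp only [mem_powersetCard, mem_filter, Fintype.mem_piFinset, mem_singleton]
  constructor
  · rintro ⟨⟨hJS, hJ⟩, hrJ, hr⟩
    exact ⟨(image_univ_eq_of_injective hr hrJ hJ).symm, fun i => hJS (hrJ i), hr⟩
  · rintro ⟨rfl, hrS, hr⟩
    refine ⟨⟨image_subset_iff.mpr fun i _ => hrS i, ?_⟩,
      fun i => mem_image_of_mem r (mem_univ i), hr⟩
    rw [card_image_of_injective _ hr, card_univ]

variable {R : Type*} [CommRing R] [DecidableEq m]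

theorem det_sum_smul_vecMulVec_eq_sum_piFinset (S : Finset κ) (c : κ → R)
    (u w : κ → m → R) :
    det (∑ k ∈ S, c k • vecMulVec (u k) (w k)) =
      ∑ r ∈ Fintype.piFinset fun _ : m => S,
        (∏ i, c (r i) * u (r i) i) * det (of fun i => w (r i)) := by
  have h_rows : ∑ k ∈ S, c k • vecMulVec (u k) (w k) =
      of fun i => ∑ k ∈ S, (c k * u k i) • w k := by
    ext i j
    simp [Matrix.sum_apply, vecMulVec_apply, mul_assoc]
  rw [h_rows]
  refine ((detRowAlternating (R := R) (n := m)).map_sum_finset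
    (fun i k => (c k * u k i) • w k) fun _ => S).trans (sum_congr rfl fun r _ => ?_)
  exact (detRowAlternating (R := R) (n := m)).map_smul_univ _ _

/-- Cauchy–Binet for `det (U D Wᵀ)` with `D` diagonal, written with rank-one matrices. -/
theorem det_sum_smul_vecMulVec_eq_sum_powersetCard [DecidableEq κ] (S : Finset κ) (c : κ → R)
    (u w : κ → m → R) :
    det (∑ k ∈ S, c k • vecMulVec (u k) (w k)) =
      ∑ J ∈ S.powersetCard (Fintype.card m),
        (∏ k ∈ J, c k) * det (∑ k ∈ J, vecMulVec (u k) (w k)) := by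
  set G : (m → κ) → R := fun r => (∏ i, u (r i) i) * det (of fun i => w (r i))
  have hG (r : m → κ) (hr : ¬Injective r) : G r = 0 := by
    obtain ⟨i, j, hij, hne⟩ := not_injective_iff.mp hr
    exact mul_eq_zero_of_right _ (det_zero_of_row_eq hne (congrArg w hij))
  have h_unweighted (J : Finset κ) :
      det (∑ k ∈ J, vecMulVec (u k) (w k)) =
        ∑ r ∈ Fintype.piFinset fun _ : m => J, G r := by
    simpa using det_sum_smul_vecMulVec_eq_sum_piFinset J 1 u w
  have h_weight (J : Finset κ) (hJ : #J = Fintype.card m) (r : m → κ) (hrJ : ∀ i, r i ∈ J) :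
      (∏ i, c (r i)) * G r = (∏ k ∈ J, c k) * G r := by
    by_cases hr : Injective r
    · rw [← image_univ_eq_of_injective hr hrJ hJ, prod_image fun i _ j _ h => hr h]
    · rw [hG r hr, mul_zero, mul_zero]
  calc det (∑ k ∈ S, c k • vecMulVec (u k) (w k))
      = ∑ r ∈ Fintype.piFinset fun _ : m => S, (∏ i, c (r i)) * G r := by
        simp_rw [det_sum_smul_vecMulVec_eq_sum_piFinset, prod_mul_distrib, mul_assoc, G]
    _ = ∑ J ∈ S.powersetCard (Fintype.card m),
          ∑ r ∈ Fintype.piFinset fun _ : m => J, (∏ i, c (r i)) * G r :=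
        sum_piFinset_eq_sum_powersetCard S _ fun r hr => by rw [hG r hr, mul_zero]
    _ = _ := by
        refine sum_congr rfl fun J hJ => ?_
        rw [h_unweighted, mul_sum]
        exact sum_congr rfl fun r hr =>
          h_weight J (mem_powersetCard.mp hJ).2 r (Fintype.mem_piFinset.mp hr)

end

section
variable {l m n o κ R : Type*}

theorem submatrix_sum_smul_vecMulVec [CommSemiring R] (S : Finset κ) (c : κ → R)
    (u : κ → m → R) (w : κ → n → R) (f : l → m) (g : o → n) :
    (∑ k ∈ S, c k • vecMulVec (u k) (w k)).submatrix f g =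
      ∑ k ∈ S, c k • vecMulVec (u k ∘ f) (w k ∘ g) := by
  ext i j
  simp [Matrix.sum_apply, vecMulVec_apply]

theorem sum_smul_vecMulVec_eq_transpose_mul_diagonal_mul [CommSemiring R] [Fintype κ]
    [DecidableEq κ] (c : κ → R) (u : κ → m → R) (w : κ → n → R) :
    ∑ k, c k • vecMulVec (u k) (w k) = (of u)ᵀ * diagonal c * of w := by
  ext i j
  simp [Matrix.sum_apply, vecMulVec_apply, Matrix.mul_apply, diagonal_apply, mul_comm,
    mul_left_comm]

theorem det_sum_smul_vecMulVec_add_one [CommRing R] [Fintype m] [DecidableEq m] [Fintype κ]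
    [DecidableEq κ] (c : κ → R) (v : κ → m → R) (hv : of v * (of v)ᵀ = 1) :
    det (∑ k, c k • vecMulVec (v k) (v k) + 1) = ∏ k, (1 + c k) := by
  rw [sum_smul_vecMulVec_eq_transpose_mul_diagonal_mul, Matrix.mul_assoc, det_mul_add_one_comm,
    Matrix.mul_assoc, hv, Matrix.mul_one, add_comm, ← diagonal_one, diagonal_add, det_diagonal]

end

theorem prod_div_mul_prod_compl_one_div {ι K : Type*} [Fintype ι] [DecidableEq ι]
    [DivisionCommMonoid K] (a b : ι → K) (J : Finset ι) :
    (∏ i ∈ J, a i / b i) * ∏ i ∈ Jᶜ, 1 / b i = (∏ i ∈ J, a i) / ∏ i, b i := by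
  rw [← prod_mul_prod_compl J b, prod_div_distrib, prod_div_distrib, prod_const_one,
    div_mul_div_comm, mul_one]

theorem principalMinor_sum_smul_vecMulVec {N : ℕ} (S : Finset (Fin N)) (c : Fin N → ℝ)
    (v : Fin N → Fin N → ℝ) (Y : Finset (Fin N)) :
    principalMinor (∑ n ∈ S, c n • vecMulVec (v n) (v n)) Y =
      det (∑ n ∈ S, c n • vecMulVec (fun i : Y => v n i) (fun i : Y => v n i)) := by
  rw [principalMinor, submatrix_sum_smul_vecMulVec]
  rfl

theorem dpp_mixture_of_elementary_general {N : ℕ} (v : Fin N → (Fin N → ℝ))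
    (lam : Fin N → ℝ)
    (hv : ∀ m l : Fin N, dotProduct (v m) (v l) = if m = l then (1 : ℝ) else 0)
    (L : Matrix (Fin N) (Fin N) ℝ)
    (hL : L = ∑ n : Fin N, lam n • Matrix.vecMulVec (v n) (v n))
    (Y : Finset (Fin N)) :
    principalMinor L Y
      = ∑ J ∈ Finset.univ.filter (fun J : Finset (Fin N) => J.card = Y.card),
          (∏ n ∈ J, lam n) *
            principalMinor (∑ n ∈ J, Matrix.vecMulVec (v n) (v n)) Y ∧
    principalMinor L Y / (L + 1).det
      = ∑ J ∈ Finset.univ.filter (fun J : Finset (Fin N) => J.card = Y.card),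
          principalMinor (∑ n ∈ J, Matrix.vecMulVec (v n) (v n)) Y *
            (∏ n ∈ J, lam n / (1 + lam n)) * (∏ n ∈ Jᶜ, 1 / (1 + lam n)) := by
  have h_elementary (J : Finset (Fin N)) :
      principalMinor (∑ n ∈ J, vecMulVec (v n) (v n)) Y =
        det (∑ n ∈ J, vecMulVec (fun i : Y => v n i) (fun i : Y => v n i)) := by
    simpa using principalMinor_sum_smul_vecMulVec J 1 v Y
  have h_minor : principalMinor L Y = ∑ J ∈ univ.filter (fun J : Finset (Fin N) => #J = #Y),
      (∏ n ∈ J, lam n) * principalMinor (∑ n ∈ J, vecMulVec (v n) (v n)) Y := by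
    rw [hL, principalMinor_sum_smul_vecMulVec, det_sum_smul_vecMulVec_eq_sum_powersetCard,
      Fintype.card_coe, ← univ_filter_card_eq]
    simp_rw [h_elementary]
  have h_orthonormal : of v * (of v)ᵀ = 1 := by
    ext k l
    exact mul_apply'.trans (hv k l)
  have h_det : det (L + 1) = ∏ n, (1 + lam n) := by
    rw [hL, det_sum_smul_vecMulVec_add_one lam v h_orthonormal]
  refine ⟨h_minor, ?_⟩
  rw [h_minor, h_det, sum_div]
  refine sum_congr rfl fun J _ => ?_
  rw [mul_assoc, prod_div_mul_prod_compl_one_div, mul_div_assoc', mul_comm]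

/-- Lemma 2 (determinantal form): for `L = Σ_n λ_n v_n v_nᵀ` with orthonormal
eigenvectors and nonnegative eigenvalues, every principal minor of `L` expands as
`det(L_Y) = Σ_{|J| = |Y|} (Π_{n∈J} λ_n) det((K^{V_J})_Y)` where
`K^{V_J} = Σ_{n∈J} v_n v_nᵀ`; consequently the L-ensemble probability
`det(L_Y)/det(L+I)` is the corresponding mixture of elementary DPPs. -/
theorem dpp_mixture_of_elementary {N : ℕ} (v : Fin N → (Fin N → ℝ))
    (lam : Fin N → ℝ) (hlam : ∀ n, 0 ≤ lam n)
    (hv : ∀ m l : Fin N, dotProduct (v m) (v l) = if m = l then (1 : ℝ) else 0)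
    (L : Matrix (Fin N) (Fin N) ℝ)
    (hL : L = ∑ n : Fin N, lam n • Matrix.vecMulVec (v n) (v n))
    (Y : Finset (Fin N)) :
    principalMinor L Y
      = ∑ J ∈ Finset.univ.filter (fun J : Finset (Fin N) => J.card = Y.card),
          (∏ n ∈ J, lam n) *
            principalMinor (∑ n ∈ J, Matrix.vecMulVec (v n) (v n)) Y ∧
    principalMinor L Y / (L + 1).det
      = ∑ J ∈ Finset.univ.filter (fun J : Finset (Fin N) => J.card = Y.card),
          principalMinor (∑ n ∈ J, Matrix.vecMulVec (v n) (v n)) Y *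
            (∏ n ∈ J, lam n / (1 + lam n)) * (∏ n ∈ Jᶜ, 1 / (1 + lam n)) :=
  dpp_mixture_of_elementary_general v lam hv L hL Y
end
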